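/- Let G = ℤ₅ = ⟨x⟩. The 2-Cayley digraph Γ = Cay(G,(T_{i,j})_{2×2}) with T_{1,2} = {1, x, x⁻¹}, T_{2,1} = {x²}, T_{1,1} = T_{2,2} = ∅ is an oriented bipartite digraph with Aut(Γ) ≅ ℤ₅ acting semiregularly with orbits G×{1} and G×{2}. -/

import Mathlib

/-!
Right multiplication `(g, i) ↦ (g c⁻¹, i)` preserves the arcs `(g, i) → (t g, j)`, so `ℤ₅` embeds in
`Aut Γ`, acting regularly on each side `G × {i}` (with `i : Fin 2`, side `0` is the paper's `G × {1}`).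
Conversely, an automorphism preserves the sides (vertices on side `0` have three out-neighbours, those on
side `1` only one), and after composing with a translation it fixes `(1, 1)`. On side `1` it is then a
permutation `π` of `ℤ₅` fixing `1`, and on side `0` it is `g ↦ x² π (x⁻² g)` because of the arcs
`(g, 1) → (x² g, 0)`; the arcs from side `0` to side `1` leave only `π = id`, a finite check.
-/

/-- Arc relation of the 2-Cayley digraph with `T₁₂ = S`, `T₂₁ = T`,
`T₁₁ = T₂₂ = ∅`, on vertex set `G × Fin 2`. -/
def cay2Arc {G : Type*} [Group G] (S T : Set G) (u v : G × Fin 2) : Prop :=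
  (u.2 = 0 ∧ v.2 = 1 ∧ ∃ s ∈ S, v.1 = s * u.1) ∨
    (u.2 = 1 ∧ v.2 = 0 ∧ ∃ t ∈ T, v.1 = t * u.1)

/-- The automorphism group of the digraph with arc relation `Arc`. -/
def autSubgroup {V : Type*} (Arc : V → V → Prop) : Subgroup (Equiv.Perm V) where
  carrier := {σ | ∀ u v, Arc u v ↔ Arc (σ u) (σ v)}
  one_mem' := fun _ _ => Iff.rfl
  mul_mem' := by
    intro σ τ hσ hτ u v
    simpa using (hτ u v).trans (hσ (τ u) (τ v))
  inv_mem' := by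
    intro σ hσ u v
    simpa using (hσ (σ⁻¹ u) (σ⁻¹ v)).symm

theorem exists_two_arcs_apply_iff {V : Type*} {Arc : V → V → Prop} {σ : Equiv.Perm V}
    (hσ : σ ∈ autSubgroup Arc) (p : V) :
    (∃ q r, q ≠ r ∧ Arc (σ p) q ∧ Arc (σ p) r) ↔ ∃ q r, q ≠ r ∧ Arc p q ∧ Arc p r := by
  constructor
  · rintro ⟨q, r, hqr, hq, hr⟩
    refine ⟨σ⁻¹ q, σ⁻¹ r, fun h => hqr (by simpa using congrArg σ h), ?_, ?_⟩
    · exact (hσ p _).2 (by simpa using hq)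
    · exact (hσ p _).2 (by simpa using hr)
  · rintro ⟨q, r, hqr, hq, hr⟩
    exact ⟨σ q, σ r, σ.injective.ne hqr, (hσ p q).1 hq, (hσ p r).1 hr⟩

section TwoCayleyDigraph

variable {G : Type*} [Group G] (S T : Set G)

theorem cay2Arc_one_zero_iff {a b : G} :
    cay2Arc S T (a, 1) (b, 0) ↔ ∃ t ∈ T, b = t * a := by
  simp [cay2Arc]

theorem cay2Arc_mul_right_iff (c : G) (u v : G × Fin 2) :
    cay2Arc S T (u.1 * c, u.2) (v.1 * c, v.2) ↔ cay2Arc S T u v := by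
  simp only [cay2Arc, ← mul_assoc, mul_left_inj]

def cay2RightRegular : G →* autSubgroup (cay2Arc S T) where
  toFun c := ⟨(Equiv.mulRight c⁻¹).prodCongr (Equiv.refl _),
    fun u v => (cay2Arc_mul_right_iff S T c⁻¹ u v).symm⟩
  map_one' := Subtype.ext (Equiv.ext fun p => by simp)
  map_mul' c d := Subtype.ext (Equiv.ext fun p => Prod.ext (by simp [mul_assoc]) rfl)

variable {S T}

@[simp]
theorem cay2RightRegular_apply (c : G) (p : G × Fin 2) :
    (cay2RightRegular S T c : Equiv.Perm (G × Fin 2)) p = (p.1 * c⁻¹, p.2) :=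
  rfl

theorem cay2RightRegular_apply_eq_self_iff {c : G} {p : G × Fin 2} :
    (cay2RightRegular S T c : Equiv.Perm (G × Fin 2)) p = p ↔ c = 1 := by
  simp [Prod.ext_iff]

theorem cay2RightRegular_injective : Function.Injective (cay2RightRegular S T) :=
  (injective_iff_map_eq_one _).2 fun c hc =>
    (cay2RightRegular_apply_eq_self_iff (p := (1, 0))).1 (by rw [hc]; rfl)

theorem cay2RightRegular_inv_mul_apply (g h : G) (i : Fin 2) :
    (cay2RightRegular S T (h⁻¹ * g) : Equiv.Perm (G × Fin 2)) (g, i) = (h, i) := by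
  simp only [cay2RightRegular_apply, mul_inv_rev, inv_inv, mul_inv_cancel_left]

end TwoCayleyDigraph

namespace Cay2ZMod5

abbrev C5 := Multiplicative (ZMod 5)

abbrev x : C5 := Multiplicative.ofAdd 1

abbrev S : Set C5 := {1, x, x⁻¹}

abbrev T : Set C5 := {x ^ 2}

instance (u v : C5 × Fin 2) : Decidable (cay2Arc S T u v) := by
  unfold cay2Arc; infer_instance

theorem S_inter_T_inv : S ∩ T⁻¹ = ∅ := by
  ext s
  simp only [Set.mem_inter_iff, Set.mem_inv, Set.mem_insert_iff, Set.mem_singleton_iff,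
    Set.mem_empty_iff_false, iff_false]
  revert s
  decide

theorem exists_two_arcs_iff :
    ∀ p : C5 × Fin 2, (∃ q r, q ≠ r ∧ cay2Arc S T p q ∧ cay2Arc S T p r) ↔ p.2 = 0 := by
  decide

theorem aut_apply_snd {σ : Equiv.Perm (C5 × Fin 2)} (hσ : σ ∈ autSubgroup (cay2Arc S T))
    (p : C5 × Fin 2) : (σ p).2 = p.2 := by
  have h0 : (σ p).2 = 0 ↔ p.2 = 0 := by
    rw [← exists_two_arcs_iff, ← exists_two_arcs_iff, exists_two_arcs_apply_iff hσ]
  omega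

set_option maxRecDepth 100000 in
theorem apply_eq_self_of_forall_arc_iff : ∀ π : C5 → C5, π 1 = 1 →
    (∀ a b, cay2Arc S T (a, 0) (b, 1) ↔ cay2Arc S T (x ^ 2 * π ((x ^ 2)⁻¹ * a), 0) (π b, 1)) →
    ∀ a, π a = a := by
  decide

theorem eq_one_of_mem_aut_of_apply_one_one {σ : Equiv.Perm (C5 × Fin 2)}
    (hσ : σ ∈ autSubgroup (cay2Arc S T)) (hfix : σ (1, 1) = (1, 1)) : σ = 1 := by
  set π : C5 → C5 := fun a => (σ (a, 1)).1
  have hσ_one (a : C5) : σ (a, 1) = (π a, 1) := Prod.ext rfl (aut_apply_snd hσ _)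
  have hσ_zero (a : C5) : σ (a, 0) = (x ^ 2 * π ((x ^ 2)⁻¹ * a), 0) := by
    have harc : cay2Arc S T ((x ^ 2)⁻¹ * a, 1) (a, 0) :=
      (cay2Arc_one_zero_iff S T).2 ⟨x ^ 2, rfl, (mul_inv_cancel_left _ _).symm⟩
    have himage := (hσ _ _).1 harc
    rw [hσ_one, ← Prod.eta (σ (a, 0)), aut_apply_snd hσ, cay2Arc_one_zero_iff] at himage
    obtain ⟨t, rfl, ht⟩ := himage
    exact Prod.ext ht (aut_apply_snd hσ _)
  have hπ := apply_eq_self_of_forall_arc_iff π (congrArg Prod.fst hfix) fun a b => by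
    rw [hσ (a, 0) (b, 1), hσ_zero, hσ_one]
  ext ⟨a, i⟩ : 1
  fin_cases i
  · simp [hσ_zero, hπ]
  · simp [hσ_one, hπ]

theorem exists_cay2RightRegular_eq {σ : Equiv.Perm (C5 × Fin 2)}
    (hσ : σ ∈ autSubgroup (cay2Arc S T)) :
    ∃ c, (cay2RightRegular S T c : Equiv.Perm (C5 × Fin 2)) = σ := by
  obtain ⟨h, hh⟩ : ∃ h, σ (1, 1) = (h, 1) := ⟨_, Prod.ext rfl (aut_apply_snd hσ _)⟩
  refine ⟨h⁻¹, inv_mul_eq_one.1 (eq_one_of_mem_aut_of_apply_one_one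
    (mul_mem (inv_mem (cay2RightRegular S T h⁻¹).2) hσ) ?_)⟩
  simp [hh]

theorem cay2RightRegular_bijective : Function.Bijective (cay2RightRegular S T) :=
  ⟨cay2RightRegular_injective, fun σ =>
    let ⟨c, hc⟩ := exists_cay2RightRegular_eq σ.2
    ⟨c, Subtype.ext hc⟩⟩

end Cay2ZMod5

/-- The 2-Cayley digraph of `ℤ₅` with `T₁₂ = {1, x, x⁻¹}`, `T₂₁ = {x²}` is an
oriented bipartite digraph whose automorphism group is `ℤ₅` acting
semiregularly with the two orbits `G × {1}`, `G × {2}`. -/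
theorem stmt_15 :
    let x : Multiplicative (ZMod 5) := Multiplicative.ofAdd 1
    let S : Set (Multiplicative (ZMod 5)) := {1, x, x⁻¹}
    let T : Set (Multiplicative (ZMod 5)) := {x ^ 2}
    let Arc := cay2Arc S T
    S ∩ T⁻¹ = ∅ ∧
      Nonempty (autSubgroup Arc ≃* Multiplicative (ZMod 5)) ∧
      (∀ σ ∈ autSubgroup Arc, (∃ p, σ p = p) → σ = 1) ∧
      (∀ σ ∈ autSubgroup Arc, ∀ p : Multiplicative (ZMod 5) × Fin 2,
        (σ p).2 = p.2) ∧
      (∀ (g h : Multiplicative (ZMod 5)) (i : Fin 2),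
        ∃ σ ∈ autSubgroup Arc, σ (g, i) = (h, i)) := by
  intro x S T Arc
  refine ⟨Cay2ZMod5.S_inter_T_inv,
    ⟨(MulEquiv.ofBijective _ Cay2ZMod5.cay2RightRegular_bijective).symm⟩, ?_,
    fun σ hσ => Cay2ZMod5.aut_apply_snd hσ,
    fun g h i => ⟨_, (cay2RightRegular S T (h⁻¹ * g)).2, cay2RightRegular_inv_mul_apply g h i⟩⟩
  rintro σ hσ ⟨p, hp⟩
  obtain ⟨c, rfl⟩ := Cay2ZMod5.exists_cay2RightRegular_eq hσ
  rw [cay2RightRegular_apply_eq_self_iff.1 hp, map_one]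
  rfl
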